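/- arXiv:1703.07606 — 2 statements merged into one kernel-verified Lean document; each statement's English description precedes it below -/
import Mathlib

section
/- A finite group G is p-nilpotent (i.e., G has a normal subgroup N with G = N ⋊ S for a Sylow p-subgroup S, equivalently G has a normal p-complement) if and only if for every Sylow p-subgroup S of G, every pair of subgroups P, Q ≤ S and every g ∈ G with gPg⁻¹ = Q, the conjugation map by g from P to Q agrees with conjugation by some element s ∈ S (i.e., the fusion system of G on S equals the fusion system of S on itself). -/
/-!
If `N` is a normal complement of `S` and `g = n * s` with `n ∈ N`, `s ∈ S`, then for `x ∈ P` the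
elements `n * (s * x * s⁻¹) * n⁻¹` and `s * x * s⁻¹` of `S` differ by an element of `N ⊓ S = ⊥`, so
`g` acts on `P` as `s` does.

Conversely, if `S` controls fusion then `N_G(Q)/C_G(Q)` is a `p`-group for every `p`-subgroup `Q`.
This criterion passes to subgroups, and an Alperin-type induction on `|S : P|` turns it back into
control of fusion by `S`. The focal subgroup of `S` then lies in `S'`, so for `S ≠ 1` the focal
transfer `G → S/S*` has a proper kernel `K` with `G/K` a `p`-group. By induction on `|G|`, `K` has a
normal `p`-complement; it is the set of `p'`-elements of `K`, hence normal in `G`, and it is a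
normal `p`-complement of `G`.
-/

open Subgroup
open scoped Pointwise commutatorElement

section

variable {G : Type*} [Group G] {p : ℕ}

namespace Subgroup

theorem conj_mem_conj_smul (g : G) {P : Subgroup G} {x : G} (hx : x ∈ P) :
    g * x * g⁻¹ ∈ MulAut.conj g • P :=
  smul_mem_pointwise_smul x _ P hx

theorem card_lt_card_of_lt [Finite G] {H K : Subgroup G} (h : H < K) :
    Nat.card H < Nat.card K :=
  (card_le_of_le h.le).lt_of_ne fun e => h.ne (eq_of_le_of_card_ge h.le e.ge)

theorem lt_normalizer_inf_of_lt {P S : Subgroup G} [Group.IsNilpotent S] (h : P < S) :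
    P < normalizer (P : Set G) ⊓ S := by
  have hlt : P.subgroupOf S < ⊤ := lt_top_iff_ne_top.2 fun e => h.not_ge (subgroupOf_eq_top.1 e)
  have := Group.normalizerCondition_of_isNilpotent _ hlt
  rw [← subgroupOf_normalizer_eq h.le, ← map_lt_map_iff_of_injective S.subtype_injective,
    subgroupOf_map_subtype, subgroupOf_map_subtype, inf_of_le_left h.le] at this
  exact this

theorem conj_pow_eq_of_forall_conj_eq {Q : Subgroup G} {g s : G} (hg : g ∈ normalizer (Q : Set G))
    (h : ∀ x ∈ Q, g * x * g⁻¹ = s * x * s⁻¹) (n : ℕ) :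
    ∀ x ∈ Q, g ^ n * x * (g ^ n)⁻¹ = s ^ n * x * (s ^ n)⁻¹ := by
  induction n with
  | zero => simp
  | succ n ih =>
    intro x hx
    have hsx : s * x * s⁻¹ ∈ Q := h x hx ▸ (mem_normalizer_iff.1 hg x).1 hx
    calc g ^ (n + 1) * x * (g ^ (n + 1))⁻¹ = g ^ n * (g * x * g⁻¹) * (g ^ n)⁻¹ := by group
      _ = s ^ n * (s * x * s⁻¹) * (s ^ n)⁻¹ := by rw [h x hx, ih _ hsx]
      _ = s ^ (n + 1) * x * (s ^ (n + 1))⁻¹ := by group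

end Subgroup

theorem Sylow.sup_eq_top_of_isPGroup_quotient [Finite G] [Fact p.Prime] (S : Sylow p G)
    (N : Subgroup G) [N.Normal] (hN : IsPGroup p (G ⧸ N)) : (S : Subgroup G) ⊔ N = ⊤ := by
  obtain ⟨k, hk⟩ := IsPGroup.iff_card.1 hN
  rw [← index_eq_one]
  refine Nat.eq_one_of_dvd_coprimes (((Nat.Prime.coprime_iff_not_dvd Fact.out).2
    S.not_dvd_index).pow_left k).symm (index_dvd_of_le le_sup_left) ?_
  rw [← hk, ← index_eq_card]
  exact index_dvd_of_le le_sup_right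

namespace Subgroup

theorem IsComplement'.exists_mul_eq {H K : Subgroup G} (h : H.IsComplement' K) (g : G) :
    ∃ n ∈ H, ∃ s ∈ K, n * s = g := by
  obtain ⟨⟨⟨n, hn⟩, ⟨s, hs⟩⟩, hg⟩ := ((isComplement'_def.1 h).existsUnique g).exists
  exact ⟨n, hn, s, hs, hg⟩

structure IsNormalPComplement (p : ℕ) (N : Subgroup G) : Prop where
  normal : N.Normal
  not_dvd_card : ¬ p ∣ Nat.card N
  exists_pow_mem : ∀ g : G, ∃ k : ℕ, g ^ p ^ k ∈ N

theorem IsNormalPComplement.isPGroup_quotient {N : Subgroup G} [N.Normal]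
    (hN : N.IsNormalPComplement p) : IsPGroup p (G ⧸ N) := by
  intro q
  induction q using QuotientGroup.induction_on with
  | H g =>
    obtain ⟨k, hk⟩ := hN.exists_pow_mem g
    exact ⟨k, by rwa [← QuotientGroup.mk_pow, QuotientGroup.eq_one_iff]⟩

theorem IsNormalPComplement.mem_iff_not_dvd_orderOf [Fact p.Prime] {N : Subgroup G}
    (hN : N.IsNormalPComplement p) {g : G} : g ∈ N ↔ ¬ p ∣ orderOf g := by
  have := hN.normal
  refine ⟨fun hg hp => hN.not_dvd_card (hp.trans (N.orderOf_dvd_natCard hg)), fun hg => ?_⟩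
  obtain ⟨k, hk⟩ := hN.isPGroup_quotient (g : G ⧸ N)
  have hcop : (p ^ k).Coprime (orderOf g) :=
    ((Nat.Prime.coprime_iff_not_dvd Fact.out).2 hg).pow_left k
  have h1 := Nat.eq_one_of_dvd_coprimes hcop (orderOf_dvd_of_pow_eq_one hk)
    (orderOf_map_dvd (QuotientGroup.mk' N) g)
  rwa [orderOf_eq_one_iff, QuotientGroup.eq_one_iff] at h1

theorem IsNormalPComplement.isComplement' [Finite G] [Fact p.Prime] {N : Subgroup G}
    (hN : N.IsNormalPComplement p) (S : Sylow p G) : N.IsComplement' S := by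
  have := hN.normal
  refine isComplement'_of_disjoint_and_mul_eq_univ ?_ ?_
  · exact IsPGroup.disjoint_of_coprime (IsPGroup.of_card (pow_one _).symm) S.2
      ((Nat.Prime.coprime_iff_not_dvd Fact.out).2 hN.not_dvd_card).symm
  · rw [← normal_mul, sup_comm, S.sup_eq_top_of_isPGroup_quotient N hN.isPGroup_quotient, coe_top]

theorem IsNormalPComplement.map_subtype [Fact p.Prime] {K : Subgroup G} (hK : K.Normal)
    (hGK : ∀ g : G, ∃ k : ℕ, g ^ p ^ k ∈ K) {N : Subgroup K} (hN : N.IsNormalPComplement p) :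
    (N.map K.subtype).IsNormalPComplement p where
  normal := by
    have hmem (g : G) : g ∈ N.map K.subtype ↔ g ∈ K ∧ ¬ p ∣ orderOf g := by
      refine ⟨?_, fun ⟨hgK, hg⟩ =>
        ⟨⟨g, hgK⟩, hN.mem_iff_not_dvd_orderOf.2 (by rwa [orderOf_mk]), rfl⟩⟩
      rintro ⟨x, hx, rfl⟩
      exact ⟨x.2, by rw [subtype_apply, orderOf_coe]; exact hN.mem_iff_not_dvd_orderOf.1 hx⟩
    refine ⟨fun n hn g => ?_⟩
    rw [hmem] at hn ⊢
    exact ⟨hK.conj_mem n hn.1 g, by rw [← MulAut.conj_apply, MulEquiv.orderOf_eq]; exact hn.2⟩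
  not_dvd_card := by
    rw [card_map_of_injective K.subtype_injective]
    exact hN.not_dvd_card
  exists_pow_mem g := by
    obtain ⟨a, ha⟩ := hGK g
    obtain ⟨b, hb⟩ := hN.exists_pow_mem ⟨_, ha⟩
    exact ⟨a + b, by rw [pow_add, pow_mul]; exact mem_map_of_mem K.subtype hb⟩

theorem IsComplement'.isNormalPComplement [Finite G] [Fact p.Prime] {N : Subgroup G}
    {S : Sylow p G} (hN : N.Normal) (h : N.IsComplement' S) : N.IsNormalPComplement p where
  normal := hN
  not_dvd_card := h.index_eq_card ▸ S.not_dvd_index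
  exists_pow_mem g := by
    obtain ⟨n, hn, s, hs, rfl⟩ := h.exists_mul_eq g
    obtain ⟨k, hk⟩ := S.2 ⟨s, hs⟩
    refine ⟨k, (QuotientGroup.eq_one_iff _).1 ?_⟩
    have hs1 : s ^ p ^ k = 1 := by simpa using congrArg Subtype.val hk
    rw [QuotientGroup.mk_pow, QuotientGroup.mk_mul, (QuotientGroup.eq_one_iff n).2 hn, one_mul,
      ← QuotientGroup.mk_pow, hs1, QuotientGroup.mk_one]

def ControlsFusion (S : Subgroup G) : Prop :=
  ∀ P : Subgroup G, P ≤ S → ∀ g : G, MulAut.conj g • P ≤ S →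
    ∃ s ∈ S, ∀ x ∈ P, g * x * g⁻¹ = s * x * s⁻¹

theorem IsComplement'.controlsFusion {N S : Subgroup G} (hN : N.Normal) (h : N.IsComplement' S) :
    S.ControlsFusion := by
  intro P hPS g hg
  obtain ⟨n, hn, s, hs, rfl⟩ := h.exists_mul_eq g
  refine ⟨s, hs, fun x hx => ?_⟩
  have hy : s * x * s⁻¹ ∈ S := mul_mem (mul_mem hs (hPS hx)) (inv_mem hs)
  have hny : n * (s * x * s⁻¹) * n⁻¹ ∈ S := by
    simpa only [mul_inv_rev, mul_assoc] using hg (conj_mem_conj_smul (n * s) hx)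
  have hcomm : n * (s * x * s⁻¹) * n⁻¹ * (s * x * s⁻¹)⁻¹ = 1 := by
    refine disjoint_def.1 h.disjoint ?_ (mul_mem hny (inv_mem hy))
    simpa only [mul_assoc] using mul_mem hn (hN.conj_mem _ (inv_mem hn) (s * x * s⁻¹))
  calc n * s * x * (n * s)⁻¹ = n * (s * x * s⁻¹) * n⁻¹ := by group
    _ = s * x * s⁻¹ := mul_inv_eq_one.1 hcomm

theorem ControlsFusion.focalSubgroupOf_le_commutator {S : Subgroup G} (h : S.ControlsFusion) :
    S.focalSubgroupOf ≤ _root_.commutator S := by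
  rw [focalSubgroupOf_eq_closure, closure_le]
  rintro ⟨_, hxuS⟩ ⟨x, hx, u, rfl⟩
  have huxS : u * x * u⁻¹ ∈ S := by
    simpa [commutatorElement_def, mul_assoc] using inv_mem (mul_mem (inv_mem hx) hxuS)
  obtain ⟨s, hs, hus⟩ := h (zpowers x) (zpowers_le.2 hx) u
    (pointwise_smul_subset_iff.2 (zpowers_le.2 (mem_inv_pointwise_smul_iff.2 huxS)))
  have hcomm : (⟨⁅x, u⁆, hxuS⟩ : S) = ⁅(⟨x, hx⟩ : S), ⟨s, hs⟩⁆ := by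
    ext
    calc ⁅x, u⁆ = x * (u * x * u⁻¹)⁻¹ := by rw [commutatorElement_def]; group
      _ = ⁅x, s⁆ := by rw [hus x (mem_zpowers x), commutatorElement_def]; group
  rw [SetLike.mem_coe, hcomm]
  exact commutator_mem_commutator (mem_top _) (mem_top _)

theorem ControlsFusion.ker_transferFocal_ne_top [Finite G] [Fact p.Prime] {S : Sylow p G}
    (h : (S : Subgroup G).ControlsFusion) (hS : (S : Subgroup G) ≠ ⊥) :
    (S : Subgroup G).transferFocal.ker ≠ ⊤ := by
  intro hker
  have : Nontrivial S := (nontrivial_iff_ne_bot _).2 hS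
  have : Group.IsNilpotent S := S.2.isNilpotent
  refine (Group.IsSolvable.commutator_lt_top_of_nontrivial S).ne (top_le_iff.1 ?_)
  calc ⊤ = (⊤ : Subgroup G).subgroupOf S := (top_subgroupOf _).symm
    _ = (S : Subgroup G).focalSubgroupOf := by
      rw [← hker, ← MonoidHom.ker_domRestrict]
      exact ker_restrict_transferFocal_eq_focalSubgroupOf S
    _ ≤ _root_.commutator S := h.focalSubgroupOf_le_commutator

end Subgroup

/-- `N_G(Q)/C_G(Q)` is a `p`-group for every `p`-subgroup `Q`, stated elementwise. -/
def FrobeniusCriterion (p : ℕ) (G : Type*) [Group G] : Prop :=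
  ∀ Q : Subgroup G, IsPGroup p Q → ∀ g ∈ normalizer (Q : Set G),
    ∃ k : ℕ, g ^ p ^ k ∈ centralizer (Q : Set G)

namespace FrobeniusCriterion

theorem subgroup (hc : FrobeniusCriterion p G) (K : Subgroup G) : FrobeniusCriterion p K := by
  intro Q hQ g hg
  obtain ⟨k, hk⟩ := hc (Q.map K.subtype) (hQ.map _) g
    (le_normalizer_map K.subtype (mem_map_of_mem _ hg))
  refine ⟨k, mem_centralizer_iff.2 fun x hx => Subtype.ext ?_⟩
  simpa using mem_centralizer_iff.1 hk x (mem_map_of_mem _ hx)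

theorem of_controlsFusion (h : ∀ S : Sylow p G, (S : Subgroup G).ControlsFusion) :
    FrobeniusCriterion p G := by
  intro Q hQ g hg
  obtain ⟨S, hQS⟩ := hQ.exists_le_sylow
  obtain ⟨s, hs, hgs⟩ := h S Q hQS g ((mem_normalizer_iff_map_conj_eq.1 hg).trans_le hQS)
  obtain ⟨k, hk⟩ := S.2 ⟨s, hs⟩
  have hs1 : s ^ p ^ k = 1 := by simpa using congrArg Subtype.val hk
  refine ⟨k, mem_centralizer_iff.2 fun x hx => ?_⟩
  have := conj_pow_eq_of_forall_conj_eq hg hgs (p ^ k) x hx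
  rw [hs1, one_mul, inv_one, mul_one, mul_inv_eq_iff_eq_mul] at this
  exact this.symm

variable [Finite G] [Fact p.Prime]

theorem exists_eq_mul_of_mem_normalizer (hc : FrobeniusCriterion p G) {Q : Subgroup G}
    (hQ : IsPGroup p Q) (T : Sylow p (normalizer (Q : Set G))) {g : G}
    (hg : g ∈ normalizer (Q : Set G)) :
    ∃ t ∈ (T : Subgroup _).map (normalizer (Q : Set G)).subtype,
      ∃ c ∈ centralizer (Q : Set G), g = t * c := by
  have hquot : IsPGroup p (normalizer (Q : Set G) ⧸ Q.normalizerMonoidHom.ker) := by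
    intro q
    induction q using QuotientGroup.induction_on with
    | H n =>
      obtain ⟨k, hk⟩ := hc Q hQ n n.2
      refine ⟨k, ?_⟩
      rwa [← QuotientGroup.mk_pow, QuotientGroup.eq_one_iff, normalizerMonoidHom_ker,
        mem_subgroupOf]
  have hg' : (⟨g, hg⟩ : normalizer (Q : Set G)) ∈
      (((T : Subgroup _) ⊔ Q.normalizerMonoidHom.ker : Subgroup _) : Set _) := by
    rw [T.sup_eq_top_of_isPGroup_quotient _ hquot]
    trivial
  rw [mul_normal] at hg'
  obtain ⟨t, ht, c, hcQ, htc⟩ := hg'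
  rw [SetLike.mem_coe, normalizerMonoidHom_ker, mem_subgroupOf] at hcQ
  exact ⟨t, mem_map_of_mem _ ht, c, hcQ, congrArg Subtype.val htc.symm⟩

theorem exists_conj_le_sylow (hc : FrobeniusCriterion p G) (S : Sylow p G) {Q X Y : Subgroup G}
    (hQ : IsPGroup p Q) (hX : IsPGroup p X) (hY : IsPGroup p Y)
    (hXQ : X ≤ normalizer (Q : Set G)) (hYQ : Y ≤ normalizer (Q : Set G)) :
    ∃ c ∈ centralizer (Q : Set G), ∃ h : G,
      MulAut.conj (h * c) • X ≤ S ∧ MulAut.conj h • Y ≤ S := by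
  set M := normalizer (Q : Set G)
  -- `M = T * C_G(Q)`, so some `c ∈ C_G(Q)` conjugates `X` into the Sylow subgroup `T ≥ Y` of `M`.
  obtain ⟨T, hYT⟩ := (hY.comap_subtype (K := M)).exists_le_sylow
  obtain ⟨T', hXT'⟩ := (hX.comap_subtype (K := M)).exists_le_sylow
  obtain ⟨n, hn⟩ := MulAction.exists_smul_eq M T' T
  obtain ⟨t, ht, c, hcQ, hntc⟩ := hc.exists_eq_mul_of_mem_normalizer hQ T n.2
  have hnX : MulAut.conj (n : G) • X ≤ (T : Subgroup M).map M.subtype := by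
    rw [← map_subgroupOf_eq_of_le (conj_smul_le_of_le hXQ n)]
    refine map_mono ?_
    rw [← conj_smul_subgroupOf hXQ, ← hn]
    exact pointwise_smul_le_pointwise_smul_iff.2 hXT'
  have hcX : MulAut.conj c • X ≤ (T : Subgroup M).map M.subtype := by
    rw [show c = t⁻¹ * n by rw [hntc, inv_mul_cancel_left], map_mul, mul_smul]
    exact (pointwise_smul_le_pointwise_smul_iff.2 hnX).trans
      (conj_smul_eq_self_of_mem (inv_mem ht)).le
  obtain ⟨S', hS'⟩ := (T.2.map M.subtype).exists_le_sylow
  obtain ⟨h, rfl⟩ := MulAction.exists_smul_eq G S' S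
  refine ⟨c, hcQ, h, ?_, ?_⟩
  · rw [map_mul, mul_smul, Sylow.coe_subgroup_smul]
    exact pointwise_smul_le_pointwise_smul_iff.2 (hcX.trans hS')
  · rw [Sylow.coe_subgroup_smul]
    exact pointwise_smul_le_pointwise_smul_iff.2
      ((map_subgroupOf_eq_of_le hYQ ▸ map_mono hYT).trans hS')

theorem exists_conj_eq_of_conj_smul_le (hc : FrobeniusCriterion p G) (S : Sylow p G) {g : G}
    (hg : MulAut.conj g • (S : Subgroup G) ≤ S) :
    ∃ s ∈ S, ∀ x ∈ (S : Subgroup G), g * x * g⁻¹ = s * x * s⁻¹ := by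
  have hgS : g ∈ normalizer (S : Set G) :=
    Sylow.smul_eq_iff_mem_normalizer.1 (Sylow.ext ((g • S).is_maximal' S.2 hg).symm)
  obtain ⟨t, ht, c, hcS, rfl⟩ :=
    hc.exists_eq_mul_of_mem_normalizer S.2 (S.subtype le_normalizer) hgS
  rw [Sylow.coe_subtype, map_subgroupOf_eq_of_le le_normalizer] at ht
  refine ⟨t, ht, fun x hx => ?_⟩
  calc t * c * x * (t * c)⁻¹ = t * (c * x) * c⁻¹ * t⁻¹ := by group
    _ = t * (x * c) * c⁻¹ * t⁻¹ := by rw [mem_centralizer_iff.1 hcS x hx]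
    _ = t * x * t⁻¹ := by group

theorem controlsFusion (hc : FrobeniusCriterion p G) (S : Sylow p G) :
    (S : Subgroup G).ControlsFusion := by
  intro P
  induction hn : Nat.card G - Nat.card P using Nat.strong_induction_on generalizing P with
  | _ n ih =>
  intro hPS g hgP
  obtain rfl | hPS := hPS.eq_or_lt
  · exact hc.exists_conj_eq_of_conj_smul_le S hgP
  have : Group.IsNilpotent S := S.2.isNilpotent
  set Q := MulAut.conj g • P
  have hQP : Nat.card Q = Nat.card P := (Nat.card_congr (equivSMul _ P).toEquiv).symm
  have hQS : Q < S := hgP.lt_of_ne fun e => (card_lt_card_of_lt hPS).ne (by rw [← hQP, e])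
  have hPR := lt_normalizer_inf_of_lt hPS
  have hQR := lt_normalizer_inf_of_lt hQS
  -- Move `g • N_S(P)` and `N_S(Q)` into `S` by one conjugation and apply induction to both.
  obtain ⟨c, hcQ, h, hR, hR'⟩ := hc.exists_conj_le_sylow S (X := MulAut.conj g • _)
    (S.2.to_le hQS.le) ((S.2.to_le inf_le_right).map _) (S.2.to_le inf_le_right)
    ((pointwise_smul_le_pointwise_smul_iff.2 inf_le_left).trans (le_normalizer_map _)) inf_le_left
  rw [← mul_smul, ← map_mul] at hR
  have := card_lt_card_of_lt hPR
  have := card_lt_card_of_lt hQR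
  have := card_le_card_group (normalizer (P : Set G) ⊓ S)
  have := card_le_card_group (normalizer (Q : Set G) ⊓ S)
  obtain ⟨s₁, hs₁, e₁⟩ := ih _ (by omega) _ rfl inf_le_right _ hR
  obtain ⟨s₂, hs₂, e₂⟩ := ih _ (by omega) _ rfl inf_le_right _ hR'
  refine ⟨s₂⁻¹ * s₁, mul_mem (inv_mem hs₂) hs₁, fun x hx => ?_⟩
  have hy : g * x * g⁻¹ ∈ Q := conj_mem_conj_smul g hx
  have key : s₂ * (g * x * g⁻¹) * s₂⁻¹ = s₁ * x * s₁⁻¹ := by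
    rw [← e₂ _ (hQR.le hy), ← e₁ x (hPR.le hx)]
    calc h * (g * x * g⁻¹) * h⁻¹ = h * ((g * x * g⁻¹) * c) * c⁻¹ * h⁻¹ := by group
      _ = h * (c * (g * x * g⁻¹)) * c⁻¹ * h⁻¹ := by rw [mem_centralizer_iff.1 hcQ _ hy]
      _ = h * c * g * x * (h * c * g)⁻¹ := by group
  calc g * x * g⁻¹ = s₂⁻¹ * (s₂ * (g * x * g⁻¹) * s₂⁻¹) * s₂ := by group
    _ = s₂⁻¹ * s₁ * x * (s₂⁻¹ * s₁)⁻¹ := by rw [key]; group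

/-- Frobenius' normal `p`-complement theorem. -/
theorem exists_isNormalPComplement (hc : FrobeniusCriterion p G) :
    ∃ N : Subgroup G, N.IsNormalPComplement p := by
  induction hn : Nat.card G using Nat.strong_induction_on generalizing G with
  | _ n ih =>
  obtain ⟨S⟩ : Nonempty (Sylow p G) := inferInstance
  by_cases hS : (S : Subgroup G) = ⊥
  · refine ⟨⊤, inferInstance, ?_, fun g => ⟨0, mem_top _⟩⟩
    rw [card_top, ← index_bot, ← hS]
    exact S.not_dvd_index
  set K := (S : Subgroup G).transferFocal.ker
  have hGK (g : G) : ∃ k : ℕ, g ^ p ^ k ∈ K := by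
    obtain ⟨k, hk⟩ := S.2.to_quotient (S : Subgroup G).focalSubgroupOf
      ((S : Subgroup G).transferFocal g)
    exact ⟨k, by rw [MonoidHom.mem_ker, map_pow, hk]⟩
  have hK : K < ⊤ := lt_top_iff_ne_top.2 ((hc.controlsFusion S).ker_transferFocal_ne_top hS)
  obtain ⟨N, hN⟩ := ih _ (hn ▸ (card_lt_card_of_lt hK).trans_eq card_top) (hc.subgroup K) rfl
  exact ⟨_, hN.map_subtype (MonoidHom.normal_ker _) hGK⟩

end FrobeniusCriterion

end

/-- A finite group `G` is `p`-nilpotent (it has a normal `p`-complement) if and only if for every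
Sylow `p`-subgroup `S` of `G`, all subgroups `P, Q ≤ S` and every `g ∈ G` with `gPg⁻¹ = Q`,
conjugation by `g` from `P` to `Q` agrees with conjugation by some element `s ∈ S`. -/
theorem pNilpotent_iff_fusion_controlled {p : ℕ} [Fact p.Prime] {G : Type} [Group G] [Finite G] :
    (∃ (N : Subgroup G) (S : Sylow p G), N.Normal ∧ N.IsComplement' S) ↔
    (∀ (S : Sylow p G) (P Q : Subgroup G), P ≤ S → Q ≤ S → ∀ g : G,
      Subgroup.map (MulAut.conj g).toMonoidHom P = Q →
        ∃ s ∈ S, ∀ x ∈ P, g * x * g⁻¹ = s * x * s⁻¹) := by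
  constructor
  · rintro ⟨N, S, hN, hNS⟩ S' P Q hP hQ g rfl
    exact ((hNS.isNormalPComplement hN).isComplement' S').controlsFusion hN P hP g hQ
  · intro h
    have hS (S : Sylow p G) : (S : Subgroup G).ControlsFusion :=
      fun P hP g hg => h S P _ hP hg g rfl
    obtain ⟨N, hN⟩ := (FrobeniusCriterion.of_controlsFusion hS).exists_isNormalPComplement
    obtain ⟨S⟩ : Nonempty (Sylow p G) := inferInstance
    exact ⟨N, S, hN.normal, hN.isComplement' S⟩
end

section
/- For any finite group G and prime p, the focal subgroup foc_p(G) = ⟨ x⁻¹ y : x, y ∈ S, y is G-conjugate to x ⟩ of a Sylow p-subgroup S satisfies foc_p(G) = S ∩ [G,G]. -/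
open scoped commutatorElement

theorem Subgroup.focalSubgroup_eq_closure_inv_mul_conj {G : Type*} [Group G] (H : Subgroup G) :
    H.focalSubgroup =
      Subgroup.closure {z : G | ∃ x ∈ H, ∃ g : G, g * x * g⁻¹ ∈ H ∧ z = x⁻¹ * (g * x * g⁻¹)} := by
  rw [Subgroup.focalSubgroup_def]
  congr 1
  ext z
  constructor
  · rintro ⟨hxu, x, hx, u, rfl⟩
    have hconj : u * x⁻¹ * u⁻¹ = x⁻¹ * ⁅x, u⁆ := by group
    exact ⟨x⁻¹, inv_mem hx, u, hconj ▸ mul_mem (inv_mem hx) hxu, by group⟩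
  · rintro ⟨x, hx, g, hgx, rfl⟩
    exact ⟨mul_mem (inv_mem hx) hgx, x⁻¹, inv_mem hx, g, by group⟩

/-- Focal subgroup theorem: for a Sylow `p`-subgroup `S` of a finite group `G`, the focal
subgroup `⟨x⁻¹ y : x, y ∈ S, y G-conjugate to x⟩` equals `S ∩ [G,G]`. -/
theorem focal_subgroup_eq {p : ℕ} [Fact p.Prime] {G : Type} [Group G] [Finite G]
    (S : Sylow p G) :
    Subgroup.closure {z : G | ∃ x ∈ S, ∃ g : G, g * x * g⁻¹ ∈ S ∧ z = x⁻¹ * (g * x * g⁻¹)} =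
      (S : Subgroup G) ⊓ commutator G := by
  rw [inf_comm, Subgroup.commutator_inf_eq_focalSubgroup]
  exact (Subgroup.focalSubgroup_eq_closure_inv_mul_conj (S : Subgroup G)).symm
end
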